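/- arXiv:2602.08843 — 5 statements merged into one kernel-verified Lean document; each statement's English description precedes it below -/
import Mathlib

section
/- Let C₀, C, M be real constants with C₀ ≥ 0, C > 0, M ≥ 1, and let 0 < α < 1. Let f : ℕ → ℝ≥0 satisfy f(m) ≤ C·m^α for all m ≥ 1, and let T : ℕ → ℝ≥0 satisfy T(1) ≤ C₀ and, for all n > 1, T(n) ≤ max_{1 ≤ i ≤ n−1} ( T(i) + T(n−i) + M·f(min(i, n−i)) ). Then there exists a constant C′ (depending only on C₀, C, α) such that T(n) ≤ C′·M·n for all n ≥ 1; in fact T(n) ≤ (C₀ + C/(1 − 2^(α−1)))·M·n. -/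
/-!
Take the majorant `φ n = M (K n - b n^α)` with `b = C / (1 - 2^(α-1))` and `K = C₀ + b`, and
show `T ≤ φ` by strong induction on `n`. The induction step needs
`M f(min i j) ≤ φ (i + j) - φ i - φ j = M b (i^α + j^α - (i + j)^α)`, which follows from
`f(m) ≤ C m^α` and the concavity estimate `(x + m)^α ≤ x^α + 2^(α-1) m^α` for `0 < m ≤ x`.
Dropping the negative term `-M b n^α` gives the linear bound.
-/

open Real

lemma le_two_rpow_sub_one {α : ℝ} (hα : α ≤ 1) : α ≤ (2 : ℝ) ^ (α - 1) := by
  have hlog : log 2 ≤ 1 := by linarith [log_le_sub_one_of_pos (zero_lt_two' ℝ)]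
  calc α ≤ log 2 * (α - 1) + 1 := by nlinarith
    _ ≤ exp (log 2 * (α - 1)) := add_one_le_exp _
    _ = (2 : ℝ) ^ (α - 1) := (rpow_def_of_pos two_pos _).symm

lemma rpow_add_le_rpow_add_two_rpow_mul {α x m : ℝ} (hα0 : 0 ≤ α) (hα1 : α ≤ 1)
    (hm : 0 < m) (hmx : m ≤ x) :
    (x + m) ^ α ≤ x ^ α + (2 : ℝ) ^ (α - 1) * m ^ α := by
  have hx : 0 < x := hm.trans_le hmx
  have hbernoulli : (1 + m / x) ^ α ≤ 1 + α * (m / x) :=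
    rpow_one_add_le_one_add_mul_self (by linarith [(div_pos hm hx).le]) hα0 hα1
  calc (x + m) ^ α = x ^ α * (1 + m / x) ^ α := by
        rw [← mul_rpow hx.le (by positivity), mul_add, mul_one, mul_div_cancel₀ _ hx.ne']
    _ ≤ x ^ α * (1 + α * (m / x)) := by gcongr
    _ = x ^ α + α * (x ^ (α - 1) * m) := by rw [rpow_sub_one hx.ne']; field_simp
    _ ≤ x ^ α + α * (m ^ (α - 1) * m) := by
        have := rpow_le_rpow_of_nonpos hm hmx (by linarith : α - 1 ≤ 0)
        gcongr
    _ = x ^ α + α * m ^ α := by rw [rpow_sub_one hm.ne']; field_simp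
    _ ≤ x ^ α + (2 : ℝ) ^ (α - 1) * m ^ α := by
        gcongr
        exact le_two_rpow_sub_one hα1

lemma one_sub_two_rpow_mul_min_rpow_le {α a b : ℝ} (hα0 : 0 ≤ α) (hα1 : α ≤ 1)
    (ha : 0 < a) (hb : 0 < b) :
    (1 - (2 : ℝ) ^ (α - 1)) * min a b ^ α ≤ a ^ α + b ^ α - (a + b) ^ α := by
  rcases le_total a b with hab | hba
  · have := rpow_add_le_rpow_add_two_rpow_mul hα0 hα1 ha hab
    rw [min_eq_left hab, add_comm a]
    linarith
  · have := rpow_add_le_rpow_add_two_rpow_mul hα0 hα1 hb hba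
    rw [min_eq_right hba]
    linarith

lemma le_of_split_recursion {T φ : ℕ → ℝ} (g : ℕ → ℕ → ℝ) (h1 : T 1 ≤ φ 1)
    (hrec : ∀ n, 1 < n → ∀ hne : (Finset.Icc 1 (n - 1)).Nonempty,
      T n ≤ (Finset.Icc 1 (n - 1)).sup' hne (fun i => T i + T (n - i) + g i (n - i)))
    (hφ : ∀ i j, 1 ≤ i → 1 ≤ j → φ i + φ j + g i j ≤ φ (i + j)) :
    ∀ n, 1 ≤ n → T n ≤ φ n := by
  intro n
  induction n using Nat.strong_induction_on with
  | _ n ih =>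
  intro hn
  obtain rfl | hn := hn.eq_or_lt
  · exact h1
  have hne : (Finset.Icc 1 (n - 1)).Nonempty := ⟨1, Finset.mem_Icc.2 ⟨le_rfl, by omega⟩⟩
  refine (hrec n hn hne).trans (Finset.sup'_le hne _ fun i hi => ?_)
  obtain ⟨hi1, hin⟩ := Finset.mem_Icc.1 hi
  calc T i + T (n - i) + g i (n - i) ≤ φ i + φ (n - i) + g i (n - i) := by
        gcongr
        · exact ih i (by omega) hi1
        · exact ih (n - i) (by omega) (by omega)
    _ ≤ φ (i + (n - i)) := hφ _ _ hi1 (by omega)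
    _ = φ n := by rw [Nat.add_sub_cancel' (by omega)]

theorem recursive_inequality_linear_general
    (C₀ C M α : ℝ) (hC₀ : 0 ≤ C₀) (hC : 0 < C) (hM : 1 ≤ M)
    (hα0 : 0 < α) (hα1 : α < 1)
    (f T : ℕ → ℝ)
    (hf : ∀ m, 1 ≤ m → f m ≤ C * (m : ℝ) ^ α)
    (hT1 : T 1 ≤ C₀)
    (hrec : ∀ n, 1 < n → ∀ hne : (Finset.Icc 1 (n - 1)).Nonempty,
      T n ≤ (Finset.Icc 1 (n - 1)).sup' hne
        (fun i => T i + T (n - i) + M * f (min i (n - i)))) :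
    (∃ C' : ℝ, ∀ n, 1 ≤ n → T n ≤ C' * M * n) ∧
    (∀ n, 1 ≤ n → T n ≤ (C₀ + C / (1 - (2 : ℝ) ^ (α - 1))) * M * n) := by
  have hD : 0 < 1 - (2 : ℝ) ^ (α - 1) :=
    sub_pos.2 (rpow_lt_one_of_one_lt_of_neg one_lt_two (by linarith))
  set b := C / (1 - (2 : ℝ) ^ (α - 1))
  have hb : 0 ≤ b := by positivity
  have hcost : ∀ i j : ℕ, 1 ≤ i → 1 ≤ j →
      f (min i j) ≤ b * ((i : ℝ) ^ α + (j : ℝ) ^ α - ((i : ℝ) + j) ^ α) := fun i j hi hj =>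
    calc f (min i j) ≤ C * (min (i : ℝ) j) ^ α := by exact_mod_cast hf _ (le_min hi hj)
      _ = b * ((1 - (2 : ℝ) ^ (α - 1)) * (min (i : ℝ) j) ^ α) := by
        rw [← mul_assoc, div_mul_cancel₀ _ hD.ne']
      _ ≤ _ := by
        gcongr
        exact one_sub_two_rpow_mul_min_rpow_le hα0.le hα1.le
          (by exact_mod_cast hi) (by exact_mod_cast hj)
  have hmajor := le_of_split_recursion (φ := fun n => M * ((C₀ + b) * n - b * (n : ℝ) ^ α))
    (fun i j => M * f (min i j)) (by simpa using hT1.trans (le_mul_of_one_le_left hC₀ hM)) hrec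
    fun i j hi hj => by
      have := mul_le_mul_of_nonneg_left (hcost i j hi hj) (by linarith : 0 ≤ M)
      push_cast
      linarith
  have hlinear : ∀ n, 1 ≤ n → T n ≤ (C₀ + b) * M * n := fun n hn =>
    (hmajor n hn).trans <| by nlinarith [mul_nonneg hb (rpow_nonneg n.cast_nonneg α)]
  exact ⟨⟨_, hlinear⟩, hlinear⟩

/-- The recursive inequality `T(n) ≤ max_{1 ≤ i ≤ n-1} (T(i) + T(n-i) + M·f(min(i, n-i)))`
with `f(m) ≤ C·m^α` (for `0 < α < 1`) implies `T(n) ≤ (C₀ + C/(1 - 2^(α-1)))·M·n`. -/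
theorem recursive_inequality_linear
    (C₀ C M α : ℝ) (hC₀ : 0 ≤ C₀) (hC : 0 < C) (hM : 1 ≤ M)
    (hα0 : 0 < α) (hα1 : α < 1)
    (f T : ℕ → ℝ)
    (hf0 : ∀ m, 0 ≤ f m) (hT0 : ∀ n, 0 ≤ T n)
    (hf : ∀ m, 1 ≤ m → f m ≤ C * (m : ℝ) ^ α)
    (hT1 : T 1 ≤ C₀)
    (hrec : ∀ n, 1 < n → ∀ hne : (Finset.Icc 1 (n - 1)).Nonempty,
      T n ≤ (Finset.Icc 1 (n - 1)).sup' hne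
        (fun i => T i + T (n - i) + M * f (min i (n - i)))) :
    (∃ C' : ℝ, ∀ n, 1 ≤ n → T n ≤ C' * M * n) ∧
    (∀ n, 1 ≤ n → T n ≤ (C₀ + C / (1 - (2 : ℝ) ^ (α - 1))) * M * n) :=
  recursive_inequality_linear_general C₀ C M α hC₀ hC hM hα0 hα1 f T hf hT1 hrec
end

section
/- Let N ≥ 1 be an integer and 0 < α < 1 a real number. Let 𝒮 be a finite family of nonempty discrete intervals (sets of consecutive integers) contained in {1, …, N} with the property that for every point j ∈ {1, …, N}, any two distinct intervals of 𝒮 containing j have sizes differing by a factor of at least 2 (i.e., for S ≠ S′ in 𝒮 with j ∈ S ∩ S′, either |S| ≥ 2|S′| or |S′| ≥ 2|S|). Then Σ_{S ∈ 𝒮} |S|^α ≤ N / (1 − 2^(α−1)). -/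
open Finset

private lemma charge_aux (α : ℝ) (hα1 : α < 1) :
    ∀ (T : Finset (Finset ℕ)), ∀ (m : ℕ), 1 ≤ m →
    (∀ S ∈ T, m ≤ S.card) →
    (∀ S ∈ T, ∀ S' ∈ T, S ≠ S' → 2 * S'.card ≤ S.card ∨ 2 * S.card ≤ S'.card) →
    ∑ S ∈ T, (S.card : ℝ) ^ (α - 1) ≤ (m : ℝ) ^ (α - 1) / (1 - (2 : ℝ) ^ (α - 1)) := by
  have hβ0 : (0 : ℝ) < (2 : ℝ) ^ (α - 1) := Real.rpow_pos_of_pos (by norm_num) _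
  have hβ1 : (2 : ℝ) ^ (α - 1) < 1 :=
    Real.rpow_lt_one_of_one_lt_of_neg (by norm_num) (by linarith)
  intro T
  induction T using Finset.strongInduction with
  | _ T ih =>
    intro m hm hlb hd
    rcases T.eq_empty_or_nonempty with rfl | hT
    · simp only [Finset.sum_empty]
      have hm0 : (0 : ℝ) < (m : ℝ) := by exact_mod_cast hm
      have : (0 : ℝ) < (m : ℝ) ^ (α - 1) := Real.rpow_pos_of_pos hm0 _
      exact le_of_lt (div_pos this (by linarith))
    · obtain ⟨S₀, hS₀, hmin⟩ := T.exists_min_image (fun S => S.card) hT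
      have hm0 : (0 : ℝ) < (m : ℝ) := by exact_mod_cast hm
      have hcard : m ≤ S₀.card := hlb _ hS₀
      have hsum := Finset.sum_erase_add T (fun S => (S.card : ℝ) ^ (α - 1)) hS₀
      have hIH : ∑ S ∈ T.erase S₀, (S.card : ℝ) ^ (α - 1)
          ≤ ((2 * m : ℕ) : ℝ) ^ (α - 1) / (1 - (2 : ℝ) ^ (α - 1)) := by
        refine ih (T.erase S₀) (Finset.erase_ssubset hS₀) (2 * m) (by omega) ?_ ?_
        · intro S hS
          have hSne : S ≠ S₀ := Finset.ne_of_mem_erase hS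
          have hST : S ∈ T := Finset.mem_of_mem_erase hS
          have := hd S hST S₀ hS₀ hSne
          have h1 := hmin S hST
          have h2 := hlb S hST
          omega
        · intro S hS S' hS' hne
          exact hd S (Finset.mem_of_mem_erase hS) S' (Finset.mem_of_mem_erase hS') hne
      have h2m : ((2 * m : ℕ) : ℝ) ^ (α - 1) = (2 : ℝ) ^ (α - 1) * (m : ℝ) ^ (α - 1) := by
        push_cast
        rw [Real.mul_rpow (by norm_num) hm0.le]
      have hterm : (S₀.card : ℝ) ^ (α - 1) ≤ (m : ℝ) ^ (α - 1) :=
        Real.rpow_le_rpow_of_nonpos hm0 (by exact_mod_cast hcard) (by linarith)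
      rw [h2m] at hIH
      have hd1 : (0 : ℝ) < 1 - (2 : ℝ) ^ (α - 1) := by linarith
      have hgoal : ∑ S ∈ T.erase S₀, (S.card : ℝ) ^ (α - 1) + (S₀.card : ℝ) ^ (α - 1)
          ≤ (m : ℝ) ^ (α - 1) / (1 - (2 : ℝ) ^ (α - 1)) := by
        rw [le_div_iff₀ hd1]
        rw [le_div_iff₀ hd1] at hIH
        nlinarith [hIH, hterm, hd1]
      calc ∑ S ∈ T, (S.card : ℝ) ^ (α - 1)
          = ∑ S ∈ T.erase S₀, (S.card : ℝ) ^ (α - 1) + (S₀.card : ℝ) ^ (α - 1) := hsum.symm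
        _ ≤ _ := hgoal

/-- Charging bound: if `𝒮` is a family of nonempty discrete intervals inside `{1, …, N}`
such that any two distinct intervals sharing a point have sizes differing by a factor of
at least 2, then `Σ_{S ∈ 𝒮} |S|^α ≤ N / (1 - 2^(α-1))` for any `0 < α < 1`. -/
theorem interval_charging_bound
    (N : ℕ) (hN : 1 ≤ N) (α : ℝ) (hα0 : 0 < α) (hα1 : α < 1)
    (𝒮 : Finset (Finset ℕ))
    (hsub : ∀ S ∈ 𝒮, S ⊆ Finset.Icc 1 N)
    (hne : ∀ S ∈ 𝒮, S.Nonempty)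
    (hint : ∀ S ∈ 𝒮, ∀ a ∈ S, ∀ b ∈ S, ∀ c : ℕ, a ≤ c → c ≤ b → c ∈ S)
    (hdouble : ∀ S ∈ 𝒮, ∀ S' ∈ 𝒮, S ≠ S' → ∀ j : ℕ, j ∈ S → j ∈ S' →
      2 * S'.card ≤ S.card ∨ 2 * S.card ≤ S'.card) :
    ∑ S ∈ 𝒮, (S.card : ℝ) ^ α ≤ (N : ℝ) / (1 - (2 : ℝ) ^ (α - 1)) := by
  have hβ0 : (0 : ℝ) < (2 : ℝ) ^ (α - 1) := Real.rpow_pos_of_pos (by norm_num) _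
  have hβ1 : (2 : ℝ) ^ (α - 1) < 1 :=
    Real.rpow_lt_one_of_one_lt_of_neg (by norm_num) (by linarith)
  have hd1 : (0 : ℝ) < 1 - (2 : ℝ) ^ (α - 1) := by linarith
  -- rewrite each term as a sum over points
  have step1 : ∑ S ∈ 𝒮, (S.card : ℝ) ^ α
      = ∑ S ∈ 𝒮, ∑ j ∈ S, (S.card : ℝ) ^ (α - 1) := by
    refine Finset.sum_congr rfl fun S hS => ?_
    have hc : (0 : ℝ) < (S.card : ℝ) := by
      exact_mod_cast Finset.card_pos.mpr (hne S hS)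
    have h := Real.rpow_add hc 1 (α - 1)
    rw [Real.rpow_one] at h
    rw [Finset.sum_const, nsmul_eq_mul, ← h]
    ring_nf
  rw [step1]
  -- swap summation order
  have step2 : ∑ S ∈ 𝒮, ∑ j ∈ S, (S.card : ℝ) ^ (α - 1)
      = ∑ j ∈ Finset.Icc 1 N, ∑ S ∈ 𝒮.filter (fun S => j ∈ S), (S.card : ℝ) ^ (α - 1) := by
    refine Finset.sum_comm' fun S j => ?_
    simp only [Finset.mem_filter]
    constructor
    · rintro ⟨h1, h2⟩; exact ⟨⟨h1, h2⟩, hsub S h1 h2⟩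
    · rintro ⟨⟨h1, h2⟩, _⟩; exact ⟨h1, h2⟩
  rw [step2]
  calc ∑ j ∈ Finset.Icc 1 N, ∑ S ∈ 𝒮.filter (fun S => j ∈ S), (S.card : ℝ) ^ (α - 1)
      ≤ ∑ j ∈ Finset.Icc 1 N, (1 : ℝ) / (1 - (2 : ℝ) ^ (α - 1)) := by
        refine Finset.sum_le_sum fun j _ => ?_
        have := charge_aux α hα1 (𝒮.filter (fun S => j ∈ S)) 1 le_rfl
          (fun S hS => Finset.card_pos.mpr (hne S (Finset.mem_of_mem_filter S hS)))
          (fun S hS S' hS' hne' => by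
            simp only [Finset.mem_filter] at hS hS'
            exact hdouble S hS.1 S' hS'.1 hne' j hS.2 hS'.2)
        simpa using this
    _ = (N : ℝ) / (1 - (2 : ℝ) ^ (α - 1)) := by
        rw [Finset.sum_const, Nat.card_Icc, nsmul_eq_mul]
        push_cast
        field_simp
end

section
/- Let n be a positive integer divisible by 4 and let L be any member of the family F_n of point lists. Then all n points of L have pairwise distinct x-coordinates and pairwise distinct y-coordinates, and both the permutation of list indices obtained by sorting the points of L by x-coordinate and the permutation obtained by sorting by y-coordinate are fixed permutations depending only on n, independent of the choices made in constructing L. Concretely, the x-order is: the points of P_1 in list order, then P_2 in list order, then q_1, …, q_{n/4}, then P_3 in list order; and the y-order is: P_1 in list order, then P_3 in reverse list order, then q_{n/4}, …, q_1, then P_2 in reverse list order. -/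
/-- Membership in the family `F_n` (with `n = 4*m`): four blocks `p1, p2, p3, q` of `m`
points each, where `p1, p2, p3` lie (in list order, at strictly increasing parameter
values, equivalently with strictly increasing x-coordinate) on the prescribed open
segments, and `q i` (for the mathematical index `i+1 ∈ {1, …, m}`) lies on the open
segment from `(2(i+1)+1, -2(i+1)-1)` to `(2(i+1)+2, -2(i+1))`. -/
def InFamilyF (n m : ℕ) (p1 p2 p3 q : Fin m → ℝ × ℝ) : Prop :=
  (∀ i, p1 i ∈ openSegment ℝ
      (((-2 : ℝ), (-2 * (n : ℝ) - 6)))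
      (((0 : ℝ), (-2 * (n : ℝ) - 4)))) ∧
  StrictMono (fun i => (p1 i).1) ∧
  (∀ i, p2 i ∈ openSegment ℝ (((0 : ℝ), (0 : ℝ))) (((2 : ℝ), (-2 : ℝ)))) ∧
  StrictMono (fun i => (p2 i).1) ∧
  (∀ i, p3 i ∈ openSegment ℝ
      ((2 * (n : ℝ) + 2, -2 * (n : ℝ) - 2))
      ((2 * (n : ℝ) + 4, -2 * (n : ℝ) - 4))) ∧
  StrictMono (fun i => (p3 i).1) ∧
  (∀ i : Fin m, q i ∈ openSegment ℝ
      ((2 * ((i : ℕ) + 1 : ℝ) + 1, -(2 * ((i : ℕ) + 1 : ℝ)) - 1))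
      ((2 * ((i : ℕ) + 1 : ℝ) + 2, -(2 * ((i : ℕ) + 1 : ℝ)))))

/-!
Each of `P₁, P₂, P₃` lies on a segment of slope `±1`, so along it the y-coordinate is a strictly
monotone function of the x-coordinate: increasing on `P₁`, decreasing on `P₂` and `P₃`. The point
`q i` (with `i : Fin m`) lies in the window `(2i+3, 2i+4) × (-2i-3, -2i-2)`, and these windows march to the right and
down. The blocks occupy the consecutive x-ranges `(-2, 0)`, `(0, 2)`, `(2, 2n+2)`, `(2n+2, 2n+4)`
for `P₁, P₂, Q, P₃` and the consecutive y-ranges `(-2n-6, -2n-4)`, `(-2n-4, -2n-2)`,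
`(-2n-2, -2)`, `(-2, 0)` for `P₁, P₃, Q, P₂`, which gives both orders. Distinctness of the
coordinates follows because the point list is a rearrangement of both sorted lists.
-/

open Set

section StrictlySortedIn

variable {α : Type*} [Preorder α] {s t : Set α} {l l₁ l₂ : List α} {b c : α}

def StrictlySortedIn (s : Set α) (l : List α) : Prop :=
  l.Pairwise (· < ·) ∧ ∀ x ∈ l, x ∈ s

theorem StrictlySortedIn.mono (h : StrictlySortedIn s l) (hst : s ⊆ t) :
    StrictlySortedIn t l :=
  ⟨h.1, fun x hx => hst (h.2 x hx)⟩

theorem StrictlySortedIn.append (h₁ : StrictlySortedIn (Iio b) l₁)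
    (h₂ : StrictlySortedIn (Ioo b c) l₂) (hbc : b ≤ c) :
    StrictlySortedIn (Iio c) (l₁ ++ l₂) := by
  refine ⟨List.pairwise_append.2 ⟨h₁.1, h₂.1, fun x hx y hy => ?_⟩, fun x hx => ?_⟩
  · exact (h₁.2 x hx).trans (h₂.2 y hy).1
  · rcases List.mem_append.1 hx with hx | hx
    exacts [(h₁.2 x hx).trans_le hbc, (h₂.2 x hx).2]

theorem strictlySortedIn_ofFn {m : ℕ} {f : Fin m → α} (hf : StrictMono f) (hs : ∀ i, f i ∈ s) :
    StrictlySortedIn s (List.ofFn f) :=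
  ⟨List.pairwise_ofFn.2 fun _ _ h => hf h, by simpa [List.mem_ofFn] using hs⟩

theorem strictlySortedIn_reverse_ofFn {m : ℕ} {f : Fin m → α} (hf : StrictAnti f)
    (hs : ∀ i, f i ∈ s) : StrictlySortedIn s (List.ofFn f).reverse :=
  ⟨List.pairwise_reverse.2 (List.pairwise_ofFn.2 fun _ _ h => hf h),
    by simpa [List.mem_ofFn] using hs⟩

end StrictlySortedIn

theorem List.Perm.pairwise_ne_of_isChain_map_lt {α β : Type*} [Preorder β] {g : α → β}
    {l l' : List α} (hl : l.Perm l') (h : (l.map g).IsChain (· < ·)) :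
    l'.Pairwise fun u v => g u ≠ g v :=
  hl.pairwise ((List.pairwise_map.1 (List.isChain_iff_pairwise.1 h)).imp ne_of_lt) Ne.symm

section OpenSegment

variable {m : ℕ} {f : Fin m → ℝ × ℝ} {x₀ y₀ x₁ y₁ : ℝ}

theorem sub_mul_sub_eq_of_mem_openSegment {a b p p' : ℝ × ℝ} (hp : p ∈ openSegment ℝ a b)
    (hp' : p' ∈ openSegment ℝ a b) : (p'.2 - p.2) * (b.1 - a.1) = (p'.1 - p.1) * (b.2 - a.2) := by
  obtain ⟨s, t, -, -, hst, rfl⟩ := hp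
  obtain ⟨s', t', -, -, hst', rfl⟩ := hp'
  simp only [Prod.fst_add, Prod.snd_add, Prod.smul_fst, Prod.smul_snd, smul_eq_mul]
  linear_combination (a.2 * b.1 - a.1 * b.2) * (hst' - hst)

theorem strictlySortedIn_fst_of_mem_openSegment
    (hf : ∀ i, f i ∈ openSegment ℝ (x₀, y₀) (x₁, y₁)) (hx : x₀ < x₁)
    (hmono : StrictMono fun i => (f i).1) :
    StrictlySortedIn (Ioo x₀ x₁) (List.ofFn fun i => (f i).1) :=
  strictlySortedIn_ofFn hmono fun i => openSegment_eq_Ioo hx ▸ (Prod.openSegment_subset _ _ (hf i)).1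

theorem strictlySortedIn_snd_of_mem_openSegment
    (hf : ∀ i, f i ∈ openSegment ℝ (x₀, y₀) (x₁, y₁)) (hx : x₀ < x₁) (hy : y₀ < y₁)
    (hmono : StrictMono fun i => (f i).1) :
    StrictlySortedIn (Ioo y₀ y₁) (List.ofFn fun i => (f i).2) := by
  refine strictlySortedIn_ofFn (fun i j hij => ?_) fun i =>
    openSegment_eq_Ioo hy ▸ (Prod.openSegment_subset _ _ (hf i)).2
  nlinarith [sub_mul_sub_eq_of_mem_openSegment (hf i) (hf j), hmono hij]

theorem strictlySortedIn_reverse_snd_of_mem_openSegment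
    (hf : ∀ i, f i ∈ openSegment ℝ (x₀, y₀) (x₁, y₁)) (hx : x₀ < x₁) (hy : y₁ < y₀)
    (hmono : StrictMono fun i => (f i).1) :
    StrictlySortedIn (Ioo y₁ y₀) (List.ofFn fun i => (f i).2).reverse := by
  refine strictlySortedIn_reverse_ofFn (fun i j hij => ?_) fun i =>
    openSegment_eq_Ioo hy ▸ openSegment_symm ℝ y₀ y₁ ▸ (Prod.openSegment_subset _ _ (hf i)).2
  nlinarith [sub_mul_sub_eq_of_mem_openSegment (hf i) (hf j), hmono hij]

end OpenSegment

theorem strictlySortedIn_of_mem_staircase {m : ℕ} {q : Fin m → ℝ × ℝ}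
    (hq : ∀ i : Fin m, q i ∈ openSegment ℝ
      ((2 * ((i : ℕ) + 1 : ℝ) + 1, -(2 * ((i : ℕ) + 1 : ℝ)) - 1))
      ((2 * ((i : ℕ) + 1 : ℝ) + 2, -(2 * ((i : ℕ) + 1 : ℝ))))) :
    StrictlySortedIn (Ioo 2 (2 * (m : ℝ) + 2)) (List.ofFn fun i => (q i).1) ∧
      StrictlySortedIn (Ioo (-2 * (m : ℝ) - 2) (-2)) (List.ofFn fun i => (q i).2).reverse := by
  have hx (i : Fin m) : (q i).1 ∈ Ioo (2 * ((i : ℕ) : ℝ) + 3) (2 * (i : ℕ) + 4) := by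
    have := (Prod.openSegment_subset _ _ (hq i)).1
    rw [openSegment_eq_Ioo (by linarith)] at this
    exact ⟨by linarith [this.1], by linarith [this.2]⟩
  have hy (i : Fin m) : (q i).2 ∈ Ioo (-2 * ((i : ℕ) : ℝ) - 3) (-2 * (i : ℕ) - 2) := by
    have := (Prod.openSegment_subset _ _ (hq i)).2
    rw [openSegment_eq_Ioo (by linarith)] at this
    exact ⟨by linarith [this.1], by linarith [this.2]⟩
  have hlt {i j : Fin m} (hij : i < j) : ((i : ℕ) : ℝ) + 1 ≤ (j : ℕ) := by
    exact_mod_cast hij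
  have hbound (i : Fin m) : ((i : ℕ) : ℝ) + 1 ≤ m := by exact_mod_cast i.is_lt
  refine ⟨strictlySortedIn_ofFn (fun i j hij => ?_) fun i => ⟨?_, ?_⟩,
    strictlySortedIn_reverse_ofFn (fun i j hij => ?_) fun i => ⟨?_, ?_⟩⟩
  · linarith [(hx i).2, (hx j).1, hlt hij]
  · linarith [(hx i).1, (i : ℕ).cast_nonneg (α := ℝ)]
  · linarith [(hx i).2, hbound i]
  · linarith [(hy i).1, (hy j).2, hlt hij]
  · linarith [(hy i).1, hbound i]
  · linarith [(hy i).2, (i : ℕ).cast_nonneg (α := ℝ)]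

theorem familyF_fixed_sorted_orders_general
    (n m : ℕ) (hn : n = 4 * m)
    (p1 p2 p3 q : Fin m → ℝ × ℝ)
    (hF : InFamilyF n m p1 p2 p3 q) :
    List.Chain' (· < ·)
      ((List.ofFn p1 ++ List.ofFn p2 ++ List.ofFn q ++ List.ofFn p3).map Prod.fst) ∧
    List.Chain' (· < ·)
      ((List.ofFn p1 ++ (List.ofFn p3).reverse ++ (List.ofFn q).reverse ++
        (List.ofFn p2).reverse).map Prod.snd) ∧
    List.Pairwise (fun u v : ℝ × ℝ => u.1 ≠ v.1 ∧ u.2 ≠ v.2)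
      (List.ofFn p1 ++ List.ofFn p2 ++ List.ofFn p3 ++ List.ofFn q) := by
  obtain ⟨h1, hs1, h2, hs2, h3, hs3, hq⟩ := hF
  obtain ⟨hqx, hqy⟩ := strictlySortedIn_of_mem_staircase hq
  have hmn : (m : ℝ) ≤ n := by rw [hn]; push_cast; linarith [m.cast_nonneg (α := ℝ)]
  have hx : ((List.ofFn p1 ++ List.ofFn p2 ++ List.ofFn q ++ List.ofFn p3).map Prod.fst).IsChain
      (· < ·) := by
    simp only [List.map_append, List.map_ofFn]
    have hP1 := (strictlySortedIn_fst_of_mem_openSegment h1 (by norm_num) hs1).mono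
      Ioo_subset_Iio_self
    have hP2 := hP1.append (strictlySortedIn_fst_of_mem_openSegment h2 (by norm_num) hs2)
      zero_le_two
    have hQ : StrictlySortedIn (Iio (2 * (n : ℝ) + 2)) _ :=
      hP2.append (hqx.mono (Ioo_subset_Ioo_right (by linarith))) (by linarith)
    exact (hQ.append (strictlySortedIn_fst_of_mem_openSegment h3 (by linarith) hs3)
      (by linarith)).1.isChain
  have hy : ((List.ofFn p1 ++ (List.ofFn p3).reverse ++ (List.ofFn q).reverse ++
      (List.ofFn p2).reverse).map Prod.snd).IsChain (· < ·) := by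
    simp only [List.map_append, List.map_reverse, List.map_ofFn]
    have hP1 := (strictlySortedIn_snd_of_mem_openSegment h1 (by norm_num) (by linarith) hs1).mono
      Ioo_subset_Iio_self
    have hP3 := hP1.append
      (strictlySortedIn_reverse_snd_of_mem_openSegment h3 (by linarith) (by linarith) hs3)
      (by linarith)
    have hQ := hP3.append (hqy.mono (Ioo_subset_Ioo_left (by linarith))) (by linarith)
    exact (hQ.append
      (strictlySortedIn_reverse_snd_of_mem_openSegment h2 (by norm_num) (by norm_num) hs2)
      (by norm_num)).1.isChain
  refine ⟨hx, hy, List.Pairwise.and ?_ ?_⟩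
  · exact List.Perm.pairwise_ne_of_isChain_map_lt (by simp [List.perm_iff_count]; omega) hx
  · exact List.Perm.pairwise_ne_of_isChain_map_lt (by simp [List.perm_iff_count]; omega) hy

/-- For any member of `F_n`, the `4m = n` points have pairwise distinct x-coordinates and
pairwise distinct y-coordinates, the x-sorted order is `P₁, P₂, q₁, …, q_m, P₃`
(each in list order), and the y-sorted order is `P₁`, `P₃` reversed, `q_m, …, q₁`,
`P₂` reversed — both fixed permutations independent of the choices made in `L`. -/
theorem familyF_fixed_sorted_orders
    (n m : ℕ) (hm : 0 < m) (hn : n = 4 * m)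
    (p1 p2 p3 q : Fin m → ℝ × ℝ)
    (hF : InFamilyF n m p1 p2 p3 q) :
    List.Chain' (· < ·)
      ((List.ofFn p1 ++ List.ofFn p2 ++ List.ofFn q ++ List.ofFn p3).map Prod.fst) ∧
    List.Chain' (· < ·)
      ((List.ofFn p1 ++ (List.ofFn p3).reverse ++ (List.ofFn q).reverse ++
        (List.ofFn p2).reverse).map Prod.snd) ∧
    List.Pairwise (fun u v : ℝ × ℝ => u.1 ≠ v.1 ∧ u.2 ≠ v.2)
      (List.ofFn p1 ++ List.ofFn p2 ++ List.ofFn p3 ++ List.ofFn q) :=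
  familyF_fixed_sorted_orders_general n m hn p1 p2 p3 q hF
end

section
/- Let n be a positive integer divisible by 4 and let π be any permutation of {1, …, n/4}. Then there exists a member L of the family F_n such that the combinatorial onion layer decomposition (S_1, …, S_k) of the point set of L satisfies: k = n/4, each layer S_j contains exactly one point of Q, and for every i ∈ {1, …, n/4}, the point q_i lies in layer S_{n/4 + 1 − π(i)}. -/
/-- The extreme points (vertices) of the convex hull of `Q`: the points `q ∈ Q` that do
not lie in the convex hull of `Q \ {q}`. -/
def hullVertices (Q : Set (ℝ × ℝ)) : Set (ℝ × ℝ) :=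
  {q ∈ Q | q ∉ convexHull ℝ (Q \ {q})}

/-- `L = (S_1, …, S_k)` is a combinatorial onion layer decomposition of `P`. -/
def IsOnionDecomp (P : Set (ℝ × ℝ)) (L : List (Set (ℝ × ℝ))) : Prop :=
  L ≠ [] ∧
  (∀ S ∈ L, S.Nonempty) ∧
  List.Pairwise Disjoint L ∧
  (⋃₀ {S | S ∈ L}) = P ∧
  ∀ i < L.length,
    L.getD i ∅ = hullVertices (P \ ⋃ j ∈ Finset.range i, L.getD j ∅)

/-!
Put `p2` and `p3` on the antidiagonal `x + y = 0`, `p1` below it, and `q i` above it at height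
`x + y = 2 ε ^ (d + 1)`, where `ε = ratio m = 1 / (8m + 4)` and `d = m - 1 - π i` is the
(0-based) layer meant for `q i`; every point gets such an intended `depth`. Among the points of
depth at least `j`, those of depth exactly `j` are extreme: `p1_j` minimises `x + y`, `p2_j`
maximises `y`, `p3_{m-1-j}` maximises `x`, and the `q` of depth `j` maximises `x + y`. Every
deeper point lies in the triangle with base `[p2_j, p3_{m-1-j}]` on the antidiagonal and apex
`p1_j`, or, for a deeper `q`, apex the `q` of depth `j`: a deeper `q` is at least a factor `ε`
closer to the antidiagonal, and the base is wide enough for that. So the convex layers peel off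
the points in order of depth.
-/

open Set Function

section ConvexHull

variable {E : Type*} [AddCommGroup E] [Module ℝ E]

lemma notMem_convexHull_of_forall_lt (f : E →ₗ[ℝ] ℝ) {S : Set E} {p : E}
    (h : ∀ x ∈ S, f x < f p) : p ∉ convexHull ℝ S := fun hp =>
  lt_irrefl (f p) (convexHull_min h (convex_halfSpace_lt f.isLinear (f p)) hp)

lemma mem_convexHull_triple_of_smul_eq {a b c z : E} {α β γ : ℝ}
    (hα : 0 ≤ α) (hβ : 0 ≤ β) (hγ : 0 ≤ γ) (hs : 0 < α + β + γ)
    (h : (α + β + γ) • z = α • a + β • b + γ • c) : z ∈ convexHull ℝ {a, b, c} := by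
  have hmem := Finset.centerMass_mem_convexHull (t := Finset.univ) (w := ![α, β, γ])
    (z := ![a, b, c]) (s := {a, b, c})
    (by intro i _; fin_cases i <;> assumption) (by simpa [Fin.sum_univ_three] using hs)
    (by intro i _; fin_cases i <;> simp)
  convert hmem using 1
  simp only [Finset.centerMass, Fin.sum_univ_three, Matrix.cons_val_zero, Matrix.cons_val_one,
    Matrix.cons_val_two, Matrix.head_cons, Matrix.tail_cons]
  rw [← h, smul_smul, inv_mul_cancel₀ hs.ne', one_smul]

end ConvexHull

/-- In the coordinates `(x, x + y)`: `z` lies on the segment from the apex `t` to the base point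
with `x = (z.1 - θ * t.1) / (1 - θ)`, which `hlo` and `hhi` place in `[a.1, b.1]`. -/
lemma mem_convexHull_of_antidiagonal_base {a b t z : ℝ × ℝ} {θ : ℝ}
    (ha : a.1 + a.2 = 0) (hb : b.1 + b.2 = 0) (hab : a.1 < b.1)
    (hθ : 0 ≤ θ) (hz : z.1 + z.2 = θ * (t.1 + t.2))
    (hlo : (1 - θ) * a.1 ≤ z.1 - θ * t.1) (hhi : z.1 - θ * t.1 ≤ (1 - θ) * b.1) :
    z ∈ convexHull ℝ {a, t, b} := by
  apply mem_convexHull_triple_of_smul_eq (α := (1 - θ) * b.1 - (z.1 - θ * t.1))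
    (β := θ * (b.1 - a.1)) (γ := z.1 - θ * t.1 - (1 - θ) * a.1) (by linarith)
    (by nlinarith) (by linarith) (by nlinarith)
  ext
  · simp only [Prod.smul_fst, Prod.fst_add, smul_eq_mul]; ring
  · simp only [Prod.smul_snd, Prod.snd_add, smul_eq_mul]
    linear_combination (b.1 - a.1) * hz - ((1 - θ) * b.1 - (z.1 - θ * t.1)) * ha
      - (z.1 - θ * t.1 - (1 - θ) * a.1) * hb

lemma mem_openSegment_of_coords {a b x : ℝ × ℝ} {θ : ℝ} (h₀ : 0 < θ) (h₁ : θ < 1)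
    (hx₁ : x.1 = a.1 + θ * (b.1 - a.1)) (hx₂ : x.2 = a.2 + θ * (b.2 - a.2)) :
    x ∈ openSegment ℝ a b := by
  rw [openSegment_eq_image']
  exact ⟨θ, ⟨h₀, h₁⟩, Prod.ext hx₁.symm hx₂.symm⟩

lemma mem_hullVertices_of_forall_lt (f : (ℝ × ℝ) →ₗ[ℝ] ℝ) {S : Set (ℝ × ℝ)} {p : ℝ × ℝ}
    (hp : p ∈ S) (h : ∀ x ∈ S, x ≠ p → f x < f p) : p ∈ hullVertices S :=
  ⟨hp, notMem_convexHull_of_forall_lt f fun x hx => h x hx.1 hx.2⟩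

lemma notMem_hullVertices_of_mem_convexHull {S T : Set (ℝ × ℝ)} {p : ℝ × ℝ}
    (hTS : T ⊆ S) (hpT : p ∉ T) (hp : p ∈ convexHull ℝ T) : p ∉ hullVertices S :=
  fun hv => hv.2 <| convexHull_mono (t := S \ {p})
    (fun x hx => ⟨hTS hx, by rintro rfl; exact hpT hx⟩) hp

lemma getD_map_range_of_lt {α : Type*} (f : ℕ → α) (d : α) {m j : ℕ} (hj : j < m) :
    ((List.range m).map f).getD j d = f j := by
  simp [hj]

section Layers

variable {ι : Type*} (pt : ι → ℝ × ℝ) (depth : ι → ℕ)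

def layer (j : ℕ) : Set (ℝ × ℝ) := pt '' (depth ⁻¹' {j})

variable {pt depth}

lemma layer_nonempty {j : ℕ} (h : ∃ ℓ, depth ℓ = j) : (layer pt depth j).Nonempty :=
  let ⟨ℓ, hℓ⟩ := h; ⟨pt ℓ, ℓ, hℓ, rfl⟩

lemma layer_subset_range (j : ℕ) : layer pt depth j ⊆ range pt := image_subset_range _ _

section Extreme

variable (hext : ∀ ℓ, ∃ f : (ℝ × ℝ) →ₗ[ℝ] ℝ,
  ∀ ℓ', depth ℓ ≤ depth ℓ' → ℓ' ≠ ℓ → f (pt ℓ') < f (pt ℓ))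
include hext

lemma injective_of_forall_exists_lt : Injective pt := by
  intro ℓ ℓ' h
  by_contra hne
  rcases le_total (depth ℓ) (depth ℓ') with hle | hle
  · obtain ⟨f, hf⟩ := hext ℓ
    exact (hf ℓ' hle (Ne.symm hne)).ne (by rw [h])
  · obtain ⟨f, hf⟩ := hext ℓ'
    exact (hf ℓ hle hne).ne (by rw [h])

lemma mem_layer_iff {ℓ : ι} {j : ℕ} : pt ℓ ∈ layer pt depth j ↔ depth ℓ = j :=
  (injective_of_forall_exists_lt hext).mem_set_image

lemma range_diff_iUnion_layer (j : ℕ) :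
    range pt \ ⋃ i ∈ Finset.range j, layer pt depth i = pt '' {ℓ | j ≤ depth ℓ} := by
  ext x
  simp only [mem_sdiff, mem_range, mem_iUnion, Finset.mem_range, mem_image, mem_ofPred_eq]
  constructor
  · rintro ⟨⟨ℓ, rfl⟩, hx⟩
    refine ⟨ℓ, not_lt.1 fun hlt => hx ⟨depth ℓ, hlt, ?_⟩, rfl⟩
    exact (mem_layer_iff hext).2 rfl
  · rintro ⟨ℓ, hle, rfl⟩
    refine ⟨⟨ℓ, rfl⟩, fun ⟨i, hi, hmem⟩ => ?_⟩
    rw [mem_layer_iff hext] at hmem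
    omega

lemma hullVertices_eq_layer {j : ℕ}
    (hhid : ∀ ℓ, j < depth ℓ → pt ℓ ∈ convexHull ℝ (layer pt depth j)) :
    hullVertices (pt '' {ℓ | j ≤ depth ℓ}) = layer pt depth j := by
  ext x
  constructor
  · rintro hx
    obtain ⟨ℓ, hle, rfl⟩ := hx.1
    by_contra hnot
    have hlt : j < depth ℓ := lt_of_le_of_ne hle fun h => hnot ((mem_layer_iff hext).2 h.symm)
    exact notMem_hullVertices_of_mem_convexHull (image_mono fun ℓ' hℓ' => le_of_eq hℓ'.symm)
      hnot (hhid ℓ hlt) hx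
  · rintro ⟨ℓ, rfl, rfl⟩
    obtain ⟨f, hf⟩ := hext ℓ
    refine mem_hullVertices_of_forall_lt f ⟨ℓ, le_refl (depth ℓ), rfl⟩ ?_
    rintro _ ⟨ℓ', hle, rfl⟩ hne
    exact hf ℓ' hle fun h => hne (h ▸ rfl)

theorem isOnionDecomp_map_layer {m : ℕ} (hm : 0 < m) (hlt : ∀ ℓ, depth ℓ < m)
    (hsurj : ∀ j < m, ∃ ℓ, depth ℓ = j)
    (hhid : ∀ ℓ j, j < depth ℓ → pt ℓ ∈ convexHull ℝ (layer pt depth j)) :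
    IsOnionDecomp (range pt) ((List.range m).map (layer pt depth)) := by
  have hgetD : ∀ j < m, ((List.range m).map (layer pt depth)).getD j ∅ = layer pt depth j :=
    fun j => getD_map_range_of_lt _ _
  refine ⟨by simpa using hm.ne', ?_, ?_, ?_, ?_⟩
  · simp only [List.mem_map, List.mem_range]
    rintro _ ⟨j, hj, rfl⟩
    exact layer_nonempty (hsurj j hj)
  · refine List.pairwise_map.2 (List.nodup_range.imp fun {i j} hij => ?_)
    rw [Set.disjoint_left]
    rintro _ ⟨ℓ, hℓ, rfl⟩ hmem
    exact hij (hℓ.symm.trans ((mem_layer_iff hext).1 hmem))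
  · ext x
    simp only [mem_sUnion, mem_ofPred_eq, List.mem_map, List.mem_range]
    constructor
    · rintro ⟨_, ⟨j, -, rfl⟩, hx⟩
      exact layer_subset_range j hx
    · rintro ⟨ℓ, rfl⟩
      exact ⟨_, ⟨depth ℓ, hlt ℓ, rfl⟩, ℓ, rfl, rfl⟩
  · intro j hj
    rw [List.length_map, List.length_range] at hj
    have hsame : ∀ i ∈ Finset.range j,
        ((List.range m).map (layer pt depth)).getD i ∅ = layer pt depth i :=
      fun i hi => hgetD i ((Finset.mem_range.1 hi).trans hj)
    rw [hgetD j hj, iUnion₂_congr hsame, range_diff_iUnion_layer hext,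
      hullVertices_eq_layer hext (hhid · j)]

end Extreme

end Layers

namespace FamilyF

noncomputable section

variable (m : ℕ)

def param (i : ℕ) : ℝ := (i + 1) / (m + 1)

def ratio : ℝ := 1 / (8 * m + 4)

def p1 (i : Fin m) : ℝ × ℝ := (-2 + 2 * param m i, -(8 * m) - 6 + 2 * param m i)

def p2 (i : Fin m) : ℝ × ℝ := (2 * param m i, -(2 * param m i))

def p3 (i : Fin m) : ℝ × ℝ := (8 * m + 2 + 2 * param m i, -(8 * m) - 2 - 2 * param m i)

def q (π : Equiv.Perm (Fin m)) (i : Fin m) : ℝ × ℝ :=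
  (2 * i + 3 + ratio m ^ (m - π i), -(2 * i) - 3 + ratio m ^ (m - π i))

inductive Label
  | p1 (i : Fin m)
  | p2 (i : Fin m)
  | p3 (i : Fin m)
  | q (i : Fin m)

variable {m}

lemma param_pos (i : ℕ) : 0 < param m i := by unfold param; positivity

lemma param_lt_one {i : ℕ} (h : i < m) : param m i < 1 := by
  rw [param, div_lt_one (by positivity)]
  exact_mod_cast Nat.succ_lt_succ h

lemma param_strictMono : StrictMono (param m) := fun i j h => by
  unfold param
  gcongr

lemma ratio_pos : 0 < ratio m := by unfold ratio; positivity

lemma ratio_mul : ratio m * (8 * m + 4) = 1 := by unfold ratio; field_simp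

lemma ratio_lt_one : ratio m < 1 := by
  rw [ratio, div_lt_one (by positivity)]
  linarith [(m.cast_nonneg : (0 : ℝ) ≤ m)]

lemma p2_fst_add_snd (i : Fin m) : (p2 m i).1 + (p2 m i).2 = 0 := by simp only [p2]; ring

lemma p3_fst_add_snd (i : Fin m) : (p3 m i).1 + (p3 m i).2 = 0 := by simp only [p3]; ring

lemma p2_fst_lt_p3_fst (j k : Fin m) : (p2 m j).1 < (p3 m k).1 := by
  have := param_lt_one j.2; have := param_pos (m := m) k
  simp only [p2, p3]; linarith [(m.cast_nonneg : (0 : ℝ) ≤ m)]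

lemma p1_mem_convexHull {i j j' k : Fin m} (h : j < i) :
    p1 m i ∈ convexHull ℝ {p2 m j', p1 m j, p3 m k} := by
  have hm : (0 : ℝ) ≤ m := m.cast_nonneg
  have hlt := param_strictMono (m := m) h
  have hi := param_lt_one i.2
  have hj' := param_lt_one j'.2
  set S : Fin m → ℝ := fun i => (p1 m i).1 + (p1 m i).2 with hS
  have hSfst : ∀ i, (p1 m i).1 = (S i + (8 * m + 4)) / 2 := fun i => by
    simp only [hS, p1]; ring
  have hSj : S j < S i := by simp only [hS, p1]; linarith
  have hSi : S i < 0 := by simp only [hS, p1]; linarith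
  set θ := S i / S j
  have hθ : S i = θ * S j := (div_mul_cancel₀ _ (by linarith)).symm
  have hθ₁ : θ ≤ 1 := (div_le_one_of_neg (by linarith)).2 hSj.le
  -- the line through `p1 j` and `p1 i` meets the antidiagonal at `x = 4m + 2`
  have hmid : (p1 m i).1 - θ * (p1 m j).1 = (1 - θ) * (4 * m + 2) := by
    rw [hSfst, hSfst]; linear_combination hθ / 2
  refine mem_convexHull_of_antidiagonal_base (p2_fst_add_snd j') (p3_fst_add_snd k)
    (p2_fst_lt_p3_fst j' k) (div_nonneg_of_nonpos hSi.le (by linarith)) hθ ?_ ?_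
  · rw [hmid]
    exact mul_le_mul_of_nonneg_left (by simp only [p2]; linarith) (by linarith)
  · rw [hmid]
    have := param_pos (m := m) k
    exact mul_le_mul_of_nonneg_left (by simp only [p3]; linarith) (by linarith)

lemma p2_mem_convexHull (t : ℝ × ℝ) {i j k : Fin m} (h : j < i) :
    p2 m i ∈ convexHull ℝ {p2 m j, t, p3 m k} := by
  have := param_strictMono (m := m) h
  refine mem_convexHull_of_antidiagonal_base (θ := 0) (p2_fst_add_snd j) (p3_fst_add_snd k)
    (p2_fst_lt_p3_fst j k) le_rfl
    (by rw [p2_fst_add_snd, zero_mul]) ?_ ?_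
  · simp only [p2]; linarith
  · have := param_lt_one i.2; have := param_pos (m := m) k
    simp only [p2, p3]; linarith [(m.cast_nonneg : (0 : ℝ) ≤ m)]

lemma p3_mem_convexHull (t : ℝ × ℝ) {i j k : Fin m} (h : i < k) :
    p3 m i ∈ convexHull ℝ {p2 m j, t, p3 m k} := by
  have := param_strictMono (m := m) h
  refine mem_convexHull_of_antidiagonal_base (θ := 0) (p2_fst_add_snd j) (p3_fst_add_snd k)
    (p2_fst_lt_p3_fst j k) le_rfl
    (by rw [p3_fst_add_snd, zero_mul]) ?_ ?_
  · have := param_lt_one j.2; have := param_pos (m := m) i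
    simp only [p2, p3]; linarith [(m.cast_nonneg : (0 : ℝ) ≤ m)]
  · simp only [p3]; linarith

variable (π : Equiv.Perm (Fin m))

def point : Label m → ℝ × ℝ
  | .p1 i => p1 m i
  | .p2 i => p2 m i
  | .p3 i => p3 m i
  | .q i => q m π i

def depth : Label m → ℕ
  | .p1 i => i
  | .p2 i => i
  | .p3 i => m - 1 - i
  | .q i => m - 1 - π i

lemma q_fst_add_snd (i : Fin m) : (q m π i).1 + (q m π i).2 = 2 * ratio m ^ (m - π i) := by
  simp only [q]; ring

lemma ratio_pow_lt_one (i : Fin m) : ratio m ^ (m - π i) < 1 :=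
  pow_lt_one₀ ratio_pos.le ratio_lt_one (by omega)

lemma q_bounds (i : Fin m) :
    3 < (q m π i).1 ∧ (q m π i).1 < 2 * m + 2 ∧ (q m π i).2 < -2 := by
  have hpos := pow_pos (ratio_pos (m := m)) (m - π i)
  have hlt := ratio_pow_lt_one π i
  have hi : ((i : ℕ) : ℝ) + 1 ≤ m := by exact_mod_cast i.2
  simp only [q]
  refine ⟨?_, ?_, ?_⟩ <;> linarith [(Nat.cast_nonneg i : (0 : ℝ) ≤ i)]

lemma depth_lt (ℓ : Label m) : depth π ℓ < m := by
  cases ℓ with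
  | p1 i | p2 i => exact i.2
  | p3 i => simp only [depth]; omega
  | q i => simp only [depth]; have := (π i).2; omega

lemma fst_add_snd_p1_lt {i : Fin m} {ℓ : Label m} (hle : (i : ℕ) ≤ depth π ℓ)
    (hne : ℓ ≠ .p1 i) : (p1 m i).1 + (p1 m i).2 < (point π ℓ).1 + (point π ℓ).2 := by
  have hi := param_lt_one i.2
  have hm : (0 : ℝ) ≤ m := m.cast_nonneg
  cases ℓ with
  | p1 k =>
    simp only [depth] at hle
    have hik : (i : ℕ) < k := lt_of_le_of_ne hle fun h => hne (by rw [Fin.ext h])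
    have := param_strictMono (m := m) hik
    simp only [point, p1]; linarith
  | p2 k => simp only [point, p1, p2]; linarith
  | p3 k => simp only [point, p1, p3]; linarith
  | q k =>
    rw [point, q_fst_add_snd]
    have := pow_pos (ratio_pos (m := m)) (m - π k)
    simp only [p1]; linarith

lemma snd_point_lt_p2 {i : Fin m} {ℓ : Label m} (hle : (i : ℕ) ≤ depth π ℓ)
    (hne : ℓ ≠ .p2 i) : (point π ℓ).2 < (p2 m i).2 := by
  have hi := param_lt_one i.2
  have hm : (0 : ℝ) ≤ m := m.cast_nonneg
  cases ℓ with
  | p1 k => have := param_lt_one k.2; simp only [point, p1, p2]; linarith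
  | p2 k =>
    simp only [depth] at hle
    have hik : (i : ℕ) < k := lt_of_le_of_ne hle fun h => hne (by rw [Fin.ext h])
    have := param_strictMono (m := m) hik
    simp only [point, p2]; linarith
  | p3 k => have := param_pos (m := m) k; simp only [point, p2, p3]; linarith
  | q k => have := (q_bounds π k).2.2; simp only [point, p2]; linarith

lemma fst_point_lt_p3 {i : Fin m} {ℓ : Label m} (hle : m - 1 - i ≤ depth π ℓ)
    (hne : ℓ ≠ .p3 i) : (point π ℓ).1 < (p3 m i).1 := by
  have hi := param_pos (m := m) i
  have hm : (0 : ℝ) ≤ m := m.cast_nonneg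
  cases ℓ with
  | p1 k => have := param_lt_one k.2; simp only [point, p1, p3]; linarith
  | p2 k => have := param_lt_one k.2; simp only [point, p2, p3]; linarith
  | p3 k =>
    simp only [depth] at hle
    have hki : (k : ℕ) < i := by
      have := i.2; have := k.2
      have : (k : ℕ) ≠ i := fun h => hne (by rw [Fin.ext h])
      omega
    have := param_strictMono (m := m) hki
    simp only [point, p3]; linarith
  | q k => have := (q_bounds π k).2.1; simp only [point, p3]; linarith

lemma fst_add_snd_point_lt_q {i : Fin m} {ℓ : Label m} (hle : m - 1 - π i ≤ depth π ℓ)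
    (hne : ℓ ≠ .q i) : (point π ℓ).1 + (point π ℓ).2 < (q m π i).1 + (q m π i).2 := by
  rw [q_fst_add_snd]
  have hpos := pow_pos (ratio_pos (m := m)) (m - π i)
  have hm : (0 : ℝ) ≤ m := m.cast_nonneg
  cases ℓ with
  | p1 k => have := param_lt_one k.2; simp only [point, p1]; linarith
  | p2 k => simp only [point, p2]; linarith
  | p3 k => simp only [point, p3]; linarith
  | q k =>
    simp only [depth] at hle
    have hki : (π k : ℕ) < π i := by
      have := (π i).2; have := (π k).2
      have : (π k : ℕ) ≠ π i := fun h => hne (by rw [π.injective (Fin.ext h)])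
      omega
    rw [point, q_fst_add_snd]
    have := pow_lt_pow_right_of_lt_one₀ (ratio_pos (m := m)) ratio_lt_one
      (show m - π i < m - π k by omega)
    linarith

lemma exists_linear_lt (ℓ : Label m) : ∃ f : (ℝ × ℝ) →ₗ[ℝ] ℝ,
    ∀ ℓ', depth π ℓ ≤ depth π ℓ' → ℓ' ≠ ℓ → f (point π ℓ') < f (point π ℓ) := by
  cases ℓ with
  | p1 i => exact ⟨-(LinearMap.fst ℝ ℝ ℝ + LinearMap.snd ℝ ℝ ℝ),
      fun ℓ' hle hne => neg_lt_neg (fst_add_snd_p1_lt π hle hne)⟩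
  | p2 i => exact ⟨LinearMap.snd ℝ ℝ ℝ, fun ℓ' hle hne => snd_point_lt_p2 π hle hne⟩
  | p3 i => exact ⟨LinearMap.fst ℝ ℝ ℝ, fun ℓ' hle hne => fst_point_lt_p3 π hle hne⟩
  | q i => exact ⟨LinearMap.fst ℝ ℝ ℝ + LinearMap.snd ℝ ℝ ℝ,
      fun ℓ' hle hne => fst_add_snd_point_lt_q π hle hne⟩

lemma q_mem_convexHull {i i' j k : Fin m} (h : π i < π i') :
    q m π i ∈ convexHull ℝ {p2 m j, q m π i', p3 m k} := by
  have hm : (1 : ℝ) ≤ m := by exact_mod_cast i.pos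
  have hexp : m - π i' < m - π i := by omega
  set θ := ratio m ^ (m - π i - (m - π i'))
  have hθ₀ : 0 ≤ θ := pow_nonneg ratio_pos.le _
  have hθ : θ * (8 * m + 4) ≤ 1 := by
    rw [← ratio_mul (m := m)]
    gcongr
    exact pow_le_of_le_one ratio_pos.le ratio_lt_one.le (by omega)
  obtain ⟨hz₁, hz₂, -⟩ := q_bounds π i
  obtain ⟨ht₁, ht₂, -⟩ := q_bounds π i'
  have hj := param_lt_one j.2
  have hj₀ := param_pos (m := m) j
  have hk := param_lt_one k.2
  have hk₀ := param_pos (m := m) k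
  refine mem_convexHull_of_antidiagonal_base (θ := θ) (p2_fst_add_snd j) (p3_fst_add_snd k)
    (p2_fst_lt_p3_fst j k) hθ₀ ?_ ?_ ?_
  · rw [q_fst_add_snd, q_fst_add_snd, ← pow_sub_mul_pow _ hexp.le]; ring
  -- `θ ≤ ε` makes `θ * x ≤ 1` for every abscissa `x < 8m + 4` in play
  · have hθt : θ * (q m π i').1 ≤ 1 := by nlinarith
    simp only [p2]; nlinarith
  · have hθt : 0 ≤ θ * (q m π i').1 := mul_nonneg hθ₀ (by linarith)
    have hθb : θ * (p3 m k).1 ≤ 1 := by simp only [p3]; nlinarith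
    simp only [p3] at hθb ⊢; nlinarith

lemma point_mem_convexHull_layer {ℓ : Label m} {j : ℕ} (h : j < depth π ℓ) :
    point π ℓ ∈ convexHull ℝ (layer (point π) (depth π) j) := by
  have hj : j < m := h.trans (depth_lt π ℓ)
  set a : Fin m := ⟨j, hj⟩
  set b : Fin m := ⟨m - 1 - j, by omega⟩
  have hsub : ∀ ℓ', depth π ℓ' = j →
      {p2 m a, point π ℓ', p3 m b} ⊆ layer (point π) (depth π) j := by
    rintro ℓ' hℓ' _ (rfl | rfl | rfl)
    · exact ⟨.p2 a, rfl, rfl⟩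
    · exact ⟨ℓ', hℓ', rfl⟩
    · exact ⟨.p3 b, show m - 1 - (m - 1 - j) = j by omega, rfl⟩
  cases ℓ with
  | p1 i => exact convexHull_mono (hsub (.p1 a) rfl) (p1_mem_convexHull h)
  | p2 i => exact convexHull_mono (hsub (.p1 a) rfl) (p2_mem_convexHull _ h)
  | p3 i =>
    simp only [depth] at h
    exact convexHull_mono (hsub (.p1 a) rfl)
      (p3_mem_convexHull _ (show (i : ℕ) < m - 1 - j by omega))
  | q i =>
    simp only [depth] at h
    refine convexHull_mono (hsub (.q (π.symm b)) ?_) (q_mem_convexHull π ?_)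
    · simp only [depth, Equiv.apply_symm_apply, b]; omega
    · rw [Equiv.apply_symm_apply]; show (π i : ℕ) < m - 1 - j; omega

lemma range_point :
    range (point π) = range (p1 m) ∪ range (p2 m) ∪ range (p3 m) ∪ range (q m π) := by
  ext x
  simp only [mem_union, mem_range]
  constructor
  · rintro ⟨(i | i | i | i), rfl⟩
    exacts [.inl (.inl (.inl ⟨i, rfl⟩)), .inl (.inl (.inr ⟨i, rfl⟩)), .inl (.inr ⟨i, rfl⟩),
      .inr ⟨i, rfl⟩]
  · rintro (((⟨i, rfl⟩ | ⟨i, rfl⟩) | ⟨i, rfl⟩) | ⟨i, rfl⟩)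
    exacts [⟨.p1 i, rfl⟩, ⟨.p2 i, rfl⟩, ⟨.p3 i, rfl⟩, ⟨.q i, rfl⟩]

theorem isOnionDecomp_layers (hm : 0 < m) :
    IsOnionDecomp (range (p1 m) ∪ range (p2 m) ∪ range (p3 m) ∪ range (q m π))
      ((List.range m).map (layer (point π) (depth π))) := by
  rw [← range_point]
  exact isOnionDecomp_map_layer (exists_linear_lt π) hm (depth_lt π)
    (fun j hj => ⟨.p1 ⟨j, hj⟩, rfl⟩) fun _ _ => point_mem_convexHull_layer π

lemma q_mem_layer_iff {i : Fin m} {j : ℕ} :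
    q m π i ∈ layer (point π) (depth π) j ↔ m - 1 - π i = j :=
  mem_layer_iff (exists_linear_lt π) (ℓ := .q i)

theorem inFamilyF : InFamilyF (4 * m) m (p1 m) (p2 m) (p3 m) (q m π) := by
  have hmono := param_strictMono (m := m)
  refine ⟨fun i => ?_, fun i j h => ?_, fun i => ?_, fun i j h => ?_, fun i => ?_,
    fun i j h => ?_, fun i => ?_⟩
  · exact mem_openSegment_of_coords (param_pos _) (param_lt_one i.2)
      (by simp only [p1]; ring) (by simp only [p1]; push_cast; ring)
  · simp only [p1]; linarith [hmono h]
  · exact mem_openSegment_of_coords (param_pos _) (param_lt_one i.2)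
      (by simp only [p2]; ring) (by simp only [p2]; ring)
  · simp only [p2]; linarith [hmono h]
  · exact mem_openSegment_of_coords (param_pos _) (param_lt_one i.2)
      (by simp only [p3]; push_cast; ring) (by simp only [p3]; push_cast; ring)
  · simp only [p3]; linarith [hmono h]
  · exact mem_openSegment_of_coords (pow_pos ratio_pos _) (ratio_pow_lt_one π i)
      (by simp only [q]; ring) (by simp only [q]; ring)

end

end FamilyF

/-- Layers are indexed from `0`, so `S_{n/4 + 1 - π(i)}` is `L.getD (m - 1 - π i) ∅`. -/
theorem familyF_realises_every_permutation
    (n m : ℕ) (hm : 0 < m) (hn : n = 4 * m) (π : Equiv.Perm (Fin m)) :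
    ∃ p1 p2 p3 q : Fin m → ℝ × ℝ,
      InFamilyF n m p1 p2 p3 q ∧
      ∃ L : List (Set (ℝ × ℝ)),
        IsOnionDecomp (Set.range p1 ∪ Set.range p2 ∪ Set.range p3 ∪ Set.range q) L ∧
        L.length = m ∧
        (∀ j < m, ∃! i : Fin m, q i ∈ L.getD j ∅) ∧
        (∀ i : Fin m, q i ∈ L.getD (m - 1 - (π i : ℕ)) ∅) := by
  subst hn
  refine ⟨_, _, _, _, FamilyF.inFamilyF π, _, FamilyF.isOnionDecomp_layers π hm, by simp,
    fun j hj => ?_, fun i => ?_⟩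
  · simp_rw [getD_map_range_of_lt _ _ hj, FamilyF.q_mem_layer_iff]
    refine ⟨π.symm ⟨m - 1 - j, by omega⟩, by simp only [Equiv.apply_symm_apply]; omega,
      fun i hi => π.eq_symm_apply.2 (Fin.ext (show (π i : ℕ) = m - 1 - j by omega))⟩
  · rw [getD_map_range_of_lt _ _ (by omega), FamilyF.q_mem_layer_iff]
end

section
/- Let n ≥ 2 and let v_1 < v_2 < ⋯ < v_n be real numbers, and let ε_1, …, ε_n ∈ (0, 1/1000]. Define the planar point set P = { (−ε_i, v_i), (ε_i, v_i) : 1 ≤ i ≤ n }, let g = max_{1 ≤ i ≤ n−1} (v_{i+1} − v_i) be the largest gap, and let r = sup_{c ∈ convexHull(P)} ( min_{p ∈ P} ‖c − p‖ ) be the radius of the maximum empty circle of P with centre in the convex hull of P. Then g/2 ≤ r ≤ √( (g/2)² + (1/500)² ). -/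
/-!
All points of `P` lie in the thin strip `|x| ≤ 1/1000`, so empty discs are governed by the
vertical gaps. The point `(0, m)`, with `m` the middle of a largest gap `[v i, v (i+1)]`, is the
average of four points of `P`, and every point of `P` is at least `g/2` away from it vertically.
Conversely a point `c` of the hull has `|c.x| ≤ 1/1000` and `min v ≤ c.y ≤ max v`; since
consecutive `v`'s are at most `g` apart, `c.y` is within `g/2` of some `v t`, and then
`(ε t, v t)` is within `√((g/2)² + (1/500)²)` of `c`.
-/

open Set Metric

lemma Monotone.le_or_le_of_val_eq_succ {n : ℕ} {α : Type*} [Preorder α] {v : Fin n → α}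
    (hv : Monotone v) {i j : Fin n} (hij : (j : ℕ) = i + 1) (k : Fin n) :
    v k ≤ v i ∨ v j ≤ v k := by
  rcases le_or_gt k i with h | h
  · exact Or.inl (hv h)
  · exact Or.inr (hv (Fin.le_def.2 (by rw [Fin.lt_def] at h; omega)))

lemma Monotone.exists_abs_sub_le_half {n : ℕ} {v : Fin n → ℝ} (hv : Monotone v) {g y : ℝ}
    (hg : 0 ≤ g) (hgap : ∀ a b : Fin n, (b : ℕ) = a + 1 → v b - v a ≤ g)
    {i j : Fin n} (hi : v i ≤ y) (hj : y ≤ v j) : ∃ t, |y - v t| ≤ g / 2 := by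
  set T := Finset.univ.filter fun k => v k ≤ y
  have hT : T.Nonempty := ⟨i, by simpa [T]⟩
  set a := T.max' hT
  have ha : v a ≤ y := (Finset.mem_filter.1 (T.max'_mem hT)).2
  by_cases hlast : (a : ℕ) + 1 < n
  · set b : Fin n := ⟨a + 1, hlast⟩
    have hb : y < v b := by
      by_contra! h
      have hba : b ≤ a := T.le_max' b (by simp [T, h])
      simp [Fin.le_def, b] at hba
    have hab := hgap a b rfl
    rcases le_or_gt (y - v a) (v b - y) with h | h
    · exact ⟨a, abs_le.2 ⟨by linarith, by linarith⟩⟩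
    · exact ⟨b, abs_le.2 ⟨by linarith, by linarith⟩⟩
  · have hya : y = v a := le_antisymm (hj.trans (hv (Fin.le_def.2 (by omega)))) ha
    exact ⟨a, by rw [hya, sub_self, abs_zero]; linarith⟩

lemma EuclideanSpace.apply_mem_Icc_of_mem_convexHull {ι : Type*} {s : Set (EuclideanSpace ℝ ι)}
    {c : EuclideanSpace ℝ ι} (hc : c ∈ convexHull ℝ s) (k : ι) {a b : ℝ}
    (hs : ∀ p ∈ s, p k ∈ Icc a b) : c k ∈ Icc a b :=
  convexHull_min (t := EuclideanSpace.projₗ k ⁻¹' Icc a b) hs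
    ((convex_Icc a b).linear_preimage _) hc

lemma EuclideanSpace.dist_le_sqrt_of_abs_sub_le {x y : EuclideanSpace ℝ (Fin 2)} {a b : ℝ}
    (h₀ : |x 0 - y 0| ≤ a) (h₁ : |x 1 - y 1| ≤ b) : dist x y ≤ √(a ^ 2 + b ^ 2) := by
  rw [EuclideanSpace.dist_eq, Fin.sum_univ_two, Real.dist_eq, Real.dist_eq]
  gcongr

lemma EuclideanSpace.midpoint_toLp_fin_two (a b c d : ℝ) :
    midpoint ℝ !₂[a, b] !₂[c, d] = !₂[(a + c) / 2, (b + d) / 2] := by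
  ext k
  fin_cases k <;>
    simp only [midpoint_eq_smul_add, invOf_eq_inv, Fin.zero_eta, Fin.mk_one, PiLp.add_apply,
      PiLp.smul_apply, Matrix.cons_val_zero, Matrix.cons_val_one, Matrix.cons_val_fin_one,
      smul_eq_mul] <;> ring

def mirroredPairs {n : ℕ} (ε v : Fin n → ℝ) : Set (EuclideanSpace ℝ (Fin 2)) :=
  {z | ∃ i, z = !₂[-(ε i), v i] ∨ z = !₂[ε i, v i]}

section mirroredPairs

variable {n : ℕ} (ε v : Fin n → ℝ)

lemma left_mem_mirroredPairs (k : Fin n) : !₂[-(ε k), v k] ∈ mirroredPairs ε v :=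
  ⟨k, Or.inl rfl⟩

lemma right_mem_mirroredPairs (k : Fin n) : !₂[ε k, v k] ∈ mirroredPairs ε v :=
  ⟨k, Or.inr rfl⟩

lemma axis_mem_convexHull_mirroredPairs (k : Fin n) :
    !₂[0, v k] ∈ convexHull ℝ (mirroredPairs ε v) := by
  have h := (convex_convexHull ℝ _).midpoint_mem
    (subset_convexHull ℝ _ (left_mem_mirroredPairs ε v k))
    (subset_convexHull ℝ _ (right_mem_mirroredPairs ε v k))
  rwa [EuclideanSpace.midpoint_toLp_fin_two, neg_add_cancel, zero_div, add_self_div_two] at h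

lemma gap_center_mem_convexHull_mirroredPairs (i j : Fin n) :
    !₂[0, (v i + v j) / 2] ∈ convexHull ℝ (mirroredPairs ε v) := by
  have h := (convex_convexHull ℝ _).midpoint_mem
    (axis_mem_convexHull_mirroredPairs ε v i) (axis_mem_convexHull_mirroredPairs ε v j)
  rwa [EuclideanSpace.midpoint_toLp_fin_two, add_zero, zero_div] at h

lemma half_gap_le_infDist_mirroredPairs (hv : Monotone v) {i j : Fin n}
    (hij : (j : ℕ) = i + 1) :
    (v j - v i) / 2 ≤ infDist !₂[0, (v i + v j) / 2] (mirroredPairs ε v) := by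
  refine (le_infDist ⟨_, left_mem_mirroredPairs ε v i⟩).2 ?_
  rintro _ ⟨k, rfl | rfl⟩ <;>
  · refine le_trans ?_ (PiLp.dist_apply_le _ _ 1)
    change (v j - v i) / 2 ≤ |(v i + v j) / 2 - v k|
    rcases hv.le_or_le_of_val_eq_succ hij k with h | h
    · exact le_abs.2 (Or.inl (by linarith))
    · exact le_abs.2 (Or.inr (by linarith))

lemma infDist_mirroredPairs_le_of_mem_convexHull (hv : Monotone v) {δ g : ℝ}
    (hε : ∀ k, |ε k| ≤ δ) (hg : 0 ≤ g)
    (hgap : ∀ a b : Fin n, (b : ℕ) = a + 1 → v b - v a ≤ g)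
    {c : EuclideanSpace ℝ (Fin 2)} (hc : c ∈ convexHull ℝ (mirroredPairs ε v)) :
    infDist c (mirroredPairs ε v) ≤ √((g / 2) ^ 2 + (2 * δ) ^ 2) := by
  obtain ⟨-, k, -⟩ := convexHull_nonempty_iff.1 ⟨c, hc⟩
  have : Nonempty (Fin n) := ⟨k⟩
  obtain ⟨lo, hlo⟩ := Finite.exists_min v
  obtain ⟨hi, hhi⟩ := Finite.exists_max v
  have hc₀ : |c 0| ≤ δ := abs_le.2 <|
      EuclideanSpace.apply_mem_Icc_of_mem_convexHull hc 0 <| by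
    rintro _ ⟨k, rfl | rfl⟩
    · exact abs_le.1 ((abs_neg (ε k)).trans_le (hε k))
    · exact abs_le.1 (hε k)
  have hc₁ : c 1 ∈ Icc (v lo) (v hi) :=
      EuclideanSpace.apply_mem_Icc_of_mem_convexHull hc 1 <| by
    rintro _ ⟨k, rfl | rfl⟩ <;> exact ⟨hlo k, hhi k⟩
  obtain ⟨t, ht⟩ := hv.exists_abs_sub_le_half hg hgap hc₁.1 hc₁.2
  rw [add_comm]
  refine (infDist_le_dist_of_mem (right_mem_mirroredPairs ε v t)).trans
    (EuclideanSpace.dist_le_sqrt_of_abs_sub_le ?_ ht)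
  calc |c 0 - ε t| ≤ |c 0| + |ε t| := abs_sub _ _
    _ ≤ 2 * δ := by linarith [hε t]

end mirroredPairs

theorem maximum_empty_circle_gap_general
    (n : ℕ) (v : Fin n → ℝ) (hv : StrictMono v)
    (ε : Fin n → ℝ) (hε : ∀ i, ε i ∈ Set.Ioc (0 : ℝ) (1 / 1000))
    (P : Set (EuclideanSpace ℝ (Fin 2)))
    (hP : P = {z | ∃ i : Fin n,
      z = (WithLp.toLp 2 ![-(ε i), v i] : EuclideanSpace ℝ (Fin 2)) ∨
      z = (WithLp.toLp 2 ![ε i, v i] : EuclideanSpace ℝ (Fin 2))})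
    (g : ℝ)
    (hg : IsGreatest {d : ℝ | ∃ i j : Fin n, (j : ℕ) = (i : ℕ) + 1 ∧ d = v j - v i} g)
    (r : ℝ)
    (hr : r = sSup {ρ : ℝ | ∃ c ∈ convexHull ℝ P, ρ = Metric.infDist c P}) :
    g / 2 ≤ r ∧ r ≤ Real.sqrt ((g / 2) ^ 2 + (1 / 500) ^ 2) := by
  obtain ⟨⟨i, j, hij, rfl⟩, hgap⟩ := hg
  change P = mirroredPairs ε v at hP
  subst hP hr
  have hmono := hv.monotone
  have hg : 0 ≤ v j - v i := sub_nonneg.2 (hmono (Fin.le_def.2 (by omega)))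
  have hεδ : ∀ k, |ε k| ≤ 1 / 1000 := fun k =>
    (abs_of_pos (hε k).1).trans_le (hε k).2
  set S := {ρ : ℝ | ∃ c ∈ convexHull ℝ (mirroredPairs ε v),
    ρ = infDist c (mirroredPairs ε v)}
  have hub : ∀ ρ ∈ S, ρ ≤ √(((v j - v i) / 2) ^ 2 + (1 / 500) ^ 2) := by
    rintro _ ⟨c, hc, rfl⟩
    have h := infDist_mirroredPairs_le_of_mem_convexHull ε v hmono hεδ hg
      (fun a b hab => hgap ⟨a, b, hab, rfl⟩) hc
    rwa [show 2 * (1 / 1000 : ℝ) = 1 / 500 by norm_num] at h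
  have hc₀ := gap_center_mem_convexHull_mirroredPairs ε v i j
  have hlb := half_gap_le_infDist_mirroredPairs ε v hmono hij
  exact ⟨hlb.trans (le_csSup ⟨_, hub⟩ ⟨_, hc₀, rfl⟩),
    csSup_le ⟨_, _, hc₀, rfl⟩ hub⟩

/-- Maximum empty circle of the gap construction: for the point set
`P = {(-ε_i, v_i), (ε_i, v_i)}` with `v` strictly increasing and `ε_i ∈ (0, 1/1000]`,
the maximum empty circle radius `r` (over centres in the convex hull of `P`) satisfies
`g/2 ≤ r ≤ √((g/2)² + (1/500)²)`, where `g` is the largest gap of `v`. -/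
theorem maximum_empty_circle_gap
    (n : ℕ) (hn : 2 ≤ n) (v : Fin n → ℝ) (hv : StrictMono v)
    (ε : Fin n → ℝ) (hε : ∀ i, ε i ∈ Set.Ioc (0 : ℝ) (1 / 1000))
    (P : Set (EuclideanSpace ℝ (Fin 2)))
    (hP : P = {z | ∃ i : Fin n,
      z = (WithLp.toLp 2 ![-(ε i), v i] : EuclideanSpace ℝ (Fin 2)) ∨
      z = (WithLp.toLp 2 ![ε i, v i] : EuclideanSpace ℝ (Fin 2))})
    (g : ℝ)
    (hg : IsGreatest {d : ℝ | ∃ i j : Fin n, (j : ℕ) = (i : ℕ) + 1 ∧ d = v j - v i} g)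
    (r : ℝ)
    (hr : r = sSup {ρ : ℝ | ∃ c ∈ convexHull ℝ P, ρ = Metric.infDist c P}) :
    g / 2 ≤ r ∧ r ≤ Real.sqrt ((g / 2) ^ 2 + (1 / 500) ^ 2) :=
  maximum_empty_circle_gap_general n v hv ε hε P hP g hg r hr
end
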